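/- Let n_c, n_f, n_pk, n_pv ≥ 1 be integers. Let B, N ∈ ℝ^{n_f×n_f} be diagonal matrices, and let R_k ∈ ℝ^{n_f×n_pk}, R_v ∈ ℝ^{n_f×n_pv} be selection matrices: there exist maps σ_k : {1,…,n_f} → {1,…,n_pk} and σ_v : {1,…,n_f} → {1,…,n_pv} with (R_k)_{n,j} = 1 if j = σ_k(n) and 0 otherwise, and similarly for R_v. Let u_k (n_pk nodes) and u_v (n_pv nodes) be node-state arrays with values in ℝ^{n_c} such that u_k(σ_k(n)) = u_v(σ_v(n)) for every n ∈ {1,…,n_f} (the traces at the shared facet coincide). Set E^{kk} = R_k^T B N R_k and E^{kv} = R_k^T B N R_v. Then for any two-point flux f* : ℝ^{n_c} × ℝ^{n_c} → ℝ^{n_c}: ½·(Ē^{kk} ∘ F(u_k, u_k))·1 − ½·(Ē^{kv} ∘ F(u_k, u_v))·1 = 0 in ℝ^{n_pk·n_c}. -/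
import Mathlib


open Matrix

/-- `M̄ = M ⊗ I_{n_c}`: the Kronecker product of a matrix with the `nc × nc`
identity, indexed by pairs (node, component). -/
def blockMat {n m : ℕ} (nc : ℕ) (M : Matrix (Fin n) (Fin m) ℝ) :
    Matrix (Fin n × Fin nc) (Fin m × Fin nc) ℝ :=
  Matrix.of fun jp lq => M jp.1 lq.1 * (if jp.2 = lq.2 then 1 else 0)

/-- The block matrix `F(u, v)` whose `(j, l)` block of size `nc × nc` is
`2·diag(f*(u_j, v_l))`. -/
def fluxMat {n m nc : ℕ} (fstar : (Fin nc → ℝ) → (Fin nc → ℝ) → Fin nc → ℝ)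
    (u : Fin n → Fin nc → ℝ) (v : Fin m → Fin nc → ℝ) :
    Matrix (Fin n × Fin nc) (Fin m × Fin nc) ℝ :=
  Matrix.of fun jp lq => if jp.2 = lq.2 then 2 * fstar (u jp.1) (v lq.1) jp.2 else 0

/-- Entry formula for `Rᵀ B N R'` with diagonal `B, N` and selection matrices. -/
lemma E_apply {nf np np' : ℕ}
    (B N : Matrix (Fin nf) (Fin nf) ℝ) (hB : B.IsDiag) (hN : N.IsDiag)
    (σ : Fin nf → Fin np) (σ' : Fin nf → Fin np')
    (R : Matrix (Fin nf) (Fin np) ℝ) (R' : Matrix (Fin nf) (Fin np') ℝ)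
    (hR : ∀ nn j, R nn j = if j = σ nn then 1 else 0)
    (hR' : ∀ nn j, R' nn j = if j = σ' nn then 1 else 0)
    (j : Fin np) (l : Fin np') :
    (Rᵀ * B * N * R') j l
      = ∑ n : Fin nf, if j = σ n ∧ l = σ' n then B n n * N n n else 0 := by
  rw [← hB.diagonal_diag, ← hN.diagonal_diag]
  simp only [Matrix.mul_apply, Matrix.transpose_apply, hR, hR', Matrix.diagonal_apply,
    ite_mul, mul_ite, one_mul, zero_mul, mul_zero, mul_one,
    Finset.sum_ite_eq, Finset.sum_ite_eq', Finset.mem_univ, if_true]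
  refine Finset.sum_congr rfl fun n _ => ?_
  by_cases h1 : j = σ n <;> by_cases h2 : l = σ' n <;>
    simp [h1, h2, Matrix.diag]

/-- Entry formula for `(blockMat E ∘ F(u,v)) *ᵥ 1`. -/
lemma had_mulVec_apply {n m nc : ℕ} (E : Matrix (Fin n) (Fin m) ℝ)
    (fstar : (Fin nc → ℝ) → (Fin nc → ℝ) → Fin nc → ℝ)
    (u : Fin n → Fin nc → ℝ) (v : Fin m → Fin nc → ℝ) (jp : Fin n × Fin nc) :
    ((blockMat nc E).hadamard (fluxMat fstar u v) *ᵥ 1) jp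
      = ∑ l : Fin m, E jp.1 l * (2 * fstar (u jp.1) (v l) jp.2) := by
  simp only [mulVec, dotProduct, hadamard_apply, blockMat, fluxMat, Matrix.of_apply,
    Pi.one_apply, mul_one]
  rw [Fintype.sum_prod_type]
  refine Finset.sum_congr rfl fun l _ => ?_
  rw [Finset.sum_eq_single jp.2 (by intro b _ hb; simp [Ne.symm hb]) (by simp)]
  simp

/-- For diagonal-E SBP operators with selection extrapolation matrices `R_k`,
`R_v`, if the traces of two neighboring elements agree at the shared facet nodes,
then the inviscid SAT terms cancel:
`½·(Ē^{kk} ∘ F(u_k, u_k))·1 − ½·(Ē^{kv} ∘ F(u_k, u_v))·1 = 0`, where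
`E^{kk} = R_kᵀ B N R_k` and `E^{kv} = R_kᵀ B N R_v`. -/
theorem inviscid_sats_vanish_of_trace_eq
    (nc nf npk npv : ℕ) (hnc : 1 ≤ nc) (hnf : 1 ≤ nf) (hnpk : 1 ≤ npk)
    (hnpv : 1 ≤ npv)
    (B N : Matrix (Fin nf) (Fin nf) ℝ) (hB : B.IsDiag) (hN : N.IsDiag)
    (σk : Fin nf → Fin npk) (σv : Fin nf → Fin npv)
    (Rk : Matrix (Fin nf) (Fin npk) ℝ) (Rv : Matrix (Fin nf) (Fin npv) ℝ)
    (hRk : ∀ nn j, Rk nn j = if j = σk nn then 1 else 0)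
    (hRv : ∀ nn j, Rv nn j = if j = σv nn then 1 else 0)
    (uk : Fin npk → Fin nc → ℝ) (uv : Fin npv → Fin nc → ℝ)
    (htrace : ∀ nn, uk (σk nn) = uv (σv nn))
    (fstar : (Fin nc → ℝ) → (Fin nc → ℝ) → Fin nc → ℝ) :
    (1 / 2 : ℝ) • ((blockMat nc (Rkᵀ * B * N * Rk)).hadamard (fluxMat fstar uk uk) *ᵥ 1)
      - (1 / 2 : ℝ) • ((blockMat nc (Rkᵀ * B * N * Rv)).hadamard (fluxMat fstar uk uv) *ᵥ 1)
      = 0 := by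
  funext jp
  simp only [Pi.sub_apply, Pi.smul_apply, Pi.zero_apply, smul_eq_mul,
    had_mulVec_apply, sub_eq_zero]
  congr 1
  have hk := fun l => E_apply B N hB hN σk σk Rk Rk hRk hRk jp.1 l
  have hv := fun l => E_apply B N hB hN σk σv Rk Rv hRk hRv jp.1 l
  simp only [hk, hv, Finset.sum_mul]
  rw [Finset.sum_comm, Finset.sum_comm (γ := Fin npv)]
  refine Finset.sum_congr rfl fun n _ => ?_
  rw [Finset.sum_eq_single (σk n) (by intro b _ hb; simp [hb]) (by simp),
      Finset.sum_eq_single (σv n) (by intro b _ hb; simp [hb]) (by simp)]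
  by_cases h : jp.1 = σk n <;> simp [h, htrace n]
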